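/- Let T be a finite tree with positive edge weights and ρ > 0 under the postal model. Call a vertex κ a prime broadcast center if κ minimizes b_time(·, T) over V(T) and, in addition, b_time(κ, B(κ,u)) ≥ b_time(u, B(u,κ)) for every neighbor u of κ. Then a prime broadcast center of T always exists. -/

import Mathlib

/-!
Common definitions for the postal-model broadcasting problem on weighted trees.
-/

open SimpleGraph

namespace Postal

attribute [local instance] Classical.propDecidable

variable {V : Type*} [Fintype V] [DecidableEq V] (G : SimpleGraph V)

/-- The unique path (as a walk) between two vertices of a tree. -/
noncomputable def tPath (hG : G.IsTree) (u v : V) : G.Walk u v :=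
  (hG.existsUnique_path u v).exists.choose

/-- `z` lies in the open branch `O(x,y)`: the component of `T - x` containing `y`. -/
def inO (x y z : V) : Prop := ∃ p : G.Walk y z, x ∉ p.support

/-- The open branch `O(x,y)`. -/
def Obr (x y : V) : Set V := {z | inO G x y z}

/-- The closed branch `B(x,y) = T - O(x,y)` (it contains `x`). -/
def Bbr (x y : V) : Set V := {z | ¬ inO G x y z}

/-- The parent of `z` with respect to the root `u`: the penultimate vertex on the
unique `u`-to-`z` path. -/
noncomputable def parent (hG : G.IsTree) (u z : V) : V :=
  (tPath G hG u z).getVert ((tPath G hG u z).length - 1)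

/-- The receive time of `z` under schedule `σ` when `u` originates the message:
along the unique `u`-to-`z` path, each vertex is contacted in its slot `σ`,
contributing `σ·ρ` connection time plus the edge weight. -/
noncomputable def recvTime (hG : G.IsTree) (w : V → V → ℝ) (ρ : ℝ) (σ : V → ℕ) (u z : V) : ℝ :=
  ((tPath G hG u z).darts.map (fun d => (σ d.toProd.2 : ℝ) * ρ + w d.toProd.1 d.toProd.2)).sum

/-- A schedule `σ` is valid for source `u` broadcasting over the vertex set `S`:
every non-source vertex gets a slot `≥ 1`, and distinct vertices with the same
parent get distinct slots (a sender contacts its neighbors sequentially). -/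
def Valid (hG : G.IsTree) (σ : V → ℕ) (u : V) (S : Set V) : Prop :=
  (∀ z ∈ S, z ≠ u → 1 ≤ σ z) ∧
  (∀ z₁ ∈ S, ∀ z₂ ∈ S, z₁ ≠ u → z₂ ≠ u → z₁ ≠ z₂ →
    parent G hG u z₁ = parent G hG u z₂ → σ z₁ ≠ σ z₂)

/-- The minimum broadcast time for `u` to broadcast a message over the subtree
induced by `S` under the postal model with latency `ρ`. -/
noncomputable def bTime (hG : G.IsTree) (w : V → V → ℝ) (ρ : ℝ) (u : V) (S : Set V) : ℝ :=
  sInf {m | ∃ σ, Valid G hG σ u S ∧ m = sSup ((recvTime G hG w ρ σ u) '' S)}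

/-- Broadcast time over the whole tree. -/
noncomputable def bTimeT (hG : G.IsTree) (w : V → V → ℝ) (ρ : ℝ) (u : V) : ℝ :=
  bTime G hG w ρ u Set.univ

/-- The set of broadcast centers. -/
def BCtr (hG : G.IsTree) (w : V → V → ℝ) (ρ : ℝ) : Set V :=
  {u | ∀ v, bTimeT G hG w ρ u ≤ bTimeT G hG w ρ v}

/-- A prime broadcast center. -/
def IsPrime (hG : G.IsTree) (w : V → V → ℝ) (ρ : ℝ) (κ : V) : Prop :=
  κ ∈ BCtr G hG w ρ ∧
  ∀ u, G.Adj κ u → bTime G hG w ρ u (Bbr G u κ) ≤ bTime G hG w ρ κ (Bbr G κ u)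

/-- Hop distance: number of edges on the unique path. -/
noncomputable def hop (hG : G.IsTree) (x y : V) : ℕ := (tPath G hG x y).length

/-- Total weight of the unique `x`-to-`y` path. -/
noncomputable def pw (hG : G.IsTree) (w : V → V → ℝ) (x y : V) : ℝ :=
  ((tPath G hG x y).darts.map (fun d => w d.toProd.1 d.toProd.2)).sum

/-- Symmetric weight function. -/
def Wsymm (w : V → V → ℝ) : Prop := ∀ a b, w a b = w b a

/-- Positive weights on edges. -/
def Wpos (w : V → V → ℝ) : Prop := ∀ a b, G.Adj a b → 0 < w a b

/-- A scenario: a symmetric weight assignment within the uncertainty intervals. -/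
def Scenario (lo hi : V → V → ℝ) (w : V → V → ℝ) : Prop :=
  (∀ a b, w a b = w b a) ∧ ∀ a b, G.Adj a b → lo a b ≤ w a b ∧ w a b ≤ hi a b

/-- The maximum regret of `x`. -/
noncomputable def maxRegret (hG : G.IsTree) (lo hi : V → V → ℝ) (ρ : ℝ) (x : V) : ℝ :=
  sSup {r | ∃ w y, Scenario G lo hi w ∧ r = bTimeT G hG w ρ x - bTimeT G hG w ρ y}

/-- `w` is a worst-case scenario of the tree with respect to `x`. -/
def WorstCase (hG : G.IsTree) (lo hi : V → V → ℝ) (ρ : ℝ) (x : V) (w : V → V → ℝ) : Prop :=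
  Scenario G lo hi w ∧
  ∃ y, bTimeT G hG w ρ x - bTimeT G hG w ρ y = maxRegret G hG lo hi ρ x

/-- An edge `(a,b)` lies on the unique `x`-to-`y` path. -/
def onPath (hG : G.IsTree) (x y a b : V) : Prop :=
  a ∈ (tPath G hG x y).support ∧ b ∈ (tPath G hG x y).support

/-- The base scenario `α_{x,y}`: weight `hi` on the `x`-to-`y` path and on edges of
`B(y,x)`, weight `lo` elsewhere. -/
noncomputable def baseScenario (hG : G.IsTree) (lo hi : V → V → ℝ) (x y : V) : V → V → ℝ :=
  fun a b =>
    if onPath G hG x y a b ∨ (a ∈ Bbr G y x ∧ b ∈ Bbr G y x) then hi a b else lo a b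

/-- The value `w(y,v) + b_time(v, B(v,y))` of a neighbor `v` of `y`. -/
noncomputable def nval (hG : G.IsTree) (w : V → V → ℝ) (ρ : ℝ) (y v : V) : ℝ :=
  w y v + bTime G hG w ρ v (Bbr G v y)

/-- Scenario `β^j_{x,y}`: agrees with `α_{x,y}`, except that every edge in
`{(y,u_k)} ∪ E(B(u_k,y))` for `k > j` (with `u` the 1-based sorted enumeration
of the neighbors of `y` in `B(y,x)`) gets weight `lo`. -/
noncomputable def betaScenario (hG : G.IsTree) (lo hi : V → V → ℝ) (x y : V) {h : ℕ}
    (u : Fin h → V) (j : ℕ) : V → V → ℝ :=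
  fun a b =>
    if ∃ k : Fin h, j < (k : ℕ) + 1 ∧
        ((a = y ∧ b = u k) ∨ (b = y ∧ a = u k) ∨
          (a ∈ Bbr G (u k) y ∧ b ∈ Bbr G (u k) y)) then
      lo a b
    else baseScenario G hG lo hi x y a b

/-- Scenario `γ^j_{x,y}`: agrees with `α_{x,y}` on the edges in
`⋃_{1 ≤ k ≤ j} ({(y,u_k)} ∪ E(B(u_k,y)))` and with the scenario `s` elsewhere. -/
noncomputable def gammaScenario (hG : G.IsTree) (lo hi : V → V → ℝ) (s : V → V → ℝ)
    (x y : V) {h : ℕ} (u : Fin h → V) (j : ℕ) : V → V → ℝ :=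
  fun a b =>
    if ∃ k : Fin h, (k : ℕ) + 1 ≤ j ∧
        ((a = y ∧ b = u k) ∨ (b = y ∧ a = u k) ∨
          (a ∈ Bbr G (u k) y ∧ b ∈ Bbr G (u k) y)) then
      baseScenario G hG lo hi x y a b
    else s a b

/-- The set of neighbors of `y` inside the branch `B(y,x)`. -/
def nbrIn (x y : V) : Set V := {v | G.Adj y v ∧ v ∈ Bbr G y x}

end Postal

/-!
Write `F(x, y)` for `bTime x (B(x, y))`, for adjacent `x`, `y`. Any schedule from `y` restricts to
a schedule from `x` on `B(x, y)`, and `x` itself is informed no earlier than `ρ + w(x, y)`; hence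
`ρ + w(x, y) + F(x, y) ≤ bTime y S` whenever `B(x, y) ⊆ S`. In particular `F` strictly increases
along every non-backtracking walk. Conversely `x` may inform `y` first and then run a schedule
for `B(x, y)` with its remaining neighbours delayed by one slot, so
`bTimeT x ≤ ρ + w(x, y) + max (F(x, y), F(y, x))`. Together: if `F(y, x) ≤ F(x, y)` then
`bTimeT x ≤ bTimeT y`.

Some vertex `κ` has `F(u, κ) ≤ F(κ, u)` for all its neighbours `u`: otherwise stepping from every
vertex `v` to a neighbour `u` with `F(v, u) < F(u, v)` never backtracks, so `F` would increase
forever on a finite tree. By monotonicity every vertex `v` has at most one neighbour `u` with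
`F(v, u) ≤ F(u, v)`, so on the path from any `v` to `κ` each edge is oriented towards `κ`, and
the comparison above gives `bTimeT κ ≤ bTimeT v`.
-/

namespace Postal

open Walk

variable {V : Type*} {G : SimpleGraph V}

section Branches

lemma mem_bbr {x y z : V} : z ∈ Bbr G x y ↔ ¬ inO G x y z := Iff.rfl

lemma self_mem_bbr (x y : V) : x ∈ Bbr G x y :=
  fun ⟨p, hp⟩ => hp p.end_mem_support

lemma not_mem_bbr_of_ne {x y : V} (hxy : x ≠ y) : y ∉ Bbr G x y :=
  fun h => h ⟨nil, by simpa using hxy⟩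

lemma eq_of_adj_of_mem_bbr {x v u : V} (hxu : G.Adj x u) (hu : u ∈ Bbr G v x) (hvx : v ≠ x) :
    u = v := by
  by_contra huv
  exact hu ⟨cons hxu nil, by simp [hvx, Ne.symm huv]⟩

variable (hG : G.IsTree)

lemma tPath_isPath (u v : V) : (tPath G hG u v).IsPath :=
  (hG.existsUnique_path u v).exists.choose_spec

lemma eq_tPath {u v : V} {p : G.Walk u v} (hp : p.IsPath) : p = tPath G hG u v :=
  (hG.existsUnique_path u v).unique hp (tPath_isPath hG u v)

lemma tPath_self (u : V) : tPath G hG u u = nil :=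
  (eq_tPath hG IsPath.nil).symm

lemma tPath_cons {x y z : V} (hxy : G.Adj x y) (hx : x ∉ (tPath G hG y z).support) :
    tPath G hG x z = cons hxy (tPath G hG y z) :=
  (eq_tPath hG ((tPath_isPath hG y z).cons hx)).symm

lemma tPath_takeUntil [DecidableEq V] {x z v : V} (hv : v ∈ (tPath G hG x z).support) :
    (tPath G hG x z).takeUntil v hv = tPath G hG x v :=
  eq_tPath hG ((tPath_isPath hG x z).takeUntil hv)

lemma length_tPath_lt {u v z : V} (hv : v ∈ (tPath G hG u z).support) (hvu : v ≠ u) :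
    (tPath G hG v z).length < (tPath G hG u z).length := by
  classical
  rw [← eq_tPath hG ((tPath_isPath hG u z).dropUntil hv)]
  exact length_dropUntil_lt_length hv hvu

lemma inO_iff {x y z : V} : inO G x y z ↔ x ∉ (tPath G hG y z).support := by
  classical
  exact ⟨fun ⟨p, hp⟩ hx => hp (support_toPath_subset_support p (eq_tPath hG p.toPath.2 ▸ hx)),
    fun h => ⟨_, h⟩⟩

lemma mem_bbr_iff {x y z : V} (hxy : G.Adj x y) :
    z ∈ Bbr G x y ↔ y ∉ (tPath G hG x z).support := by
  rw [mem_bbr, inO_iff hG, not_not]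
  refine ⟨fun hx hy => lt_asymm (length_tPath_lt hG hx hxy.ne) (length_tPath_lt hG hy hxy.ne'),
    fun hy => ?_⟩
  by_contra hx
  exact hy (by simp [tPath_cons hG hxy hx])

include hG in
lemma bbr_compl {x y z : V} (hxy : G.Adj x y) : z ∉ Bbr G x y ↔ z ∈ Bbr G y x := by
  rw [mem_bbr_iff hG hxy.symm, mem_bbr, not_not, inO_iff hG]

lemma tPath_eq_cons_of_mem_bbr {x y z : V} (hxy : G.Adj x y) (hz : z ∈ Bbr G y x) :
    tPath G hG x z = cons hxy (tPath G hG y z) :=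
  tPath_cons hG hxy ((mem_bbr_iff hG hxy.symm).1 hz)

include hG in
lemma exists_adj_mem_bbr {x z : V} (hzx : z ≠ x) : ∃ v, G.Adj x v ∧ z ∈ Bbr G v x := by
  have hp := tPath_isPath hG x z
  generalize tPath G hG x z = p at hp
  cases p with
  | nil => exact absurd rfl hzx
  | cons h q =>
    refine ⟨_, h, (mem_bbr_iff hG h.symm).2 ?_⟩
    rw [← eq_tPath hG hp.of_cons]
    exact ((cons_isPath_iff h q).1 hp).2

lemma bbr_closed {x y z v : V} (hxy : G.Adj x y) (hz : z ∈ Bbr G x y)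
    (hv : v ∈ (tPath G hG x z).support) : v ∈ Bbr G x y := by
  classical
  rw [mem_bbr_iff hG hxy] at hz ⊢
  rw [← tPath_takeUntil hG hv]
  exact fun hy => hz (support_takeUntil_subset_support _ hv hy)

include hG in
lemma bbr_subset {x y z : V} (hxy : G.Adj x y) (hyz : G.Adj y z) (hxz : x ≠ z) :
    Bbr G x y ⊆ Bbr G y z := by
  classical
  intro v hv
  rw [mem_bbr_iff hG hxy] at hv
  rw [mem_bbr_iff hG hyz, tPath_cons hG hxy.symm (by simpa using hv), support_cons,
    List.mem_cons, not_or]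
  refine ⟨hyz.ne', fun hz => hv ?_⟩
  have hxyz : tPath G hG x z = cons hxy (cons hyz nil) :=
    (eq_tPath hG (by simp [cons_isPath_iff, hxy.ne, hyz.ne, hxz])).symm
  exact support_takeUntil_subset_support _ hz (by simp [tPath_takeUntil hG hz, hxyz])

end Branches

section Parents

variable (hG : G.IsTree)

lemma parent_adj {x z : V} (hzx : z ≠ x) : G.Adj (parent G hG x z) z := by
  have hl : (tPath G hG x z).length ≠ 0 := fun h => hzx (eq_of_length_eq_zero h).symm
  have h := (tPath G hG x z).adj_getVert_succ (i := (tPath G hG x z).length - 1) (by omega)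
  rwa [Nat.sub_add_cancel (Nat.one_le_iff_ne_zero.2 hl), getVert_length] at h

lemma parent_of_adj {x z : V} (h : G.Adj x z) : parent G hG x z = x := by
  rw [parent, ← eq_tPath hG (p := cons h nil) (by simp [cons_isPath_iff, h.ne])]
  rfl

lemma adj_iff_parent_eq {x z : V} (hzx : z ≠ x) : G.Adj x z ↔ parent G hG x z = x :=
  ⟨parent_of_adj hG, fun h => h ▸ parent_adj hG hzx⟩

lemma parent_eq_parent {x y z : V} (hxy : G.Adj x y) (hz : z ∈ Bbr G y x) (hzy : z ≠ y) :
    parent G hG x z = parent G hG y z := by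
  have hl : (tPath G hG y z).length ≠ 0 := fun h => hzy (eq_of_length_eq_zero h).symm
  rw [parent, parent, tPath_eq_cons_of_mem_bbr hG hxy hz, length_cons, Nat.add_sub_cancel,
    getVert_cons _ _ hl]

lemma parent_mem_bbr_iff {x y z : V} (hxy : G.Adj x y) (hzy : z ≠ y) :
    parent G hG x z ∈ Bbr G x y ↔ z ∈ Bbr G x y := by
  refine ⟨fun hp => ?_, fun hz => bbr_closed hG hxy hz (getVert_mem_support _ _)⟩
  by_contra hz
  rw [bbr_compl hG hxy] at hz
  rw [parent_eq_parent hG hxy hz hzy] at hp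
  exact (bbr_compl hG hxy).2 (bbr_closed hG hxy.symm hz (getVert_mem_support _ _)) hp

end Parents

section ReceiveTimes

variable (hG : G.IsTree) {w : V → V → ℝ} {ρ : ℝ}

lemma recvTime_self (σ : V → ℕ) (u : V) : recvTime G hG w ρ σ u u = 0 := by
  simp [recvTime, tPath_self]

lemma recvTime_cons (σ : V → ℕ) {x y z : V} (hxy : G.Adj x y) (hz : z ∈ Bbr G y x) :
    recvTime G hG w ρ σ x z = σ y * ρ + w x y + recvTime G hG w ρ σ y z := by
  simp [recvTime, tPath_eq_cons_of_mem_bbr hG hxy hz, add_assoc]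

lemma recvTime_congr {σ σ' : V → ℕ} {u x z : V} (hux : G.Adj u x) (hz : z ∈ Bbr G u x)
    (h : ∀ v ∈ Bbr G u x, v ≠ u → σ v = σ' v) :
    recvTime G hG w ρ σ u z = recvTime G hG w ρ σ' u z := by
  have hnodup := (tPath_isPath hG u z).support_nodup
  rw [← cons_tail_support] at hnodup
  refine congrArg List.sum (List.map_congr_left fun d hd => ?_)
  have hd : d.snd ∈ (tPath G hG u z).support.tail := map_snd_darts _ ▸ List.mem_map_of_mem hd
  have hne : d.snd ≠ u := fun h => (List.nodup_cons.1 hnodup).1 (h ▸ hd)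
  rw [h _ (bbr_closed hG hux hz (List.mem_of_mem_tail hd)) hne]

lemma recvTime_nonneg (hpos : Wpos G w) (hρ : 0 ≤ ρ) (σ : V → ℕ) (u z : V) :
    0 ≤ recvTime G hG w ρ σ u z := by
  refine List.sum_nonneg fun a ha => ?_
  obtain ⟨d, hd, rfl⟩ := List.mem_map.1 ha
  have := hpos _ _ d.adj
  positivity

variable [Finite V]

lemma recvTime_le_sSup (σ : V → ℕ) {u z : V} {S : Set V} (hz : z ∈ S) :
    recvTime G hG w ρ σ u z ≤ sSup (recvTime G hG w ρ σ u '' S) :=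
  le_csSup (S.toFinite.image _).bddAbove ⟨z, hz, rfl⟩

end ReceiveTimes

section BroadcastTimes

variable (hG : G.IsTree) {w : V → V → ℝ} {ρ : ℝ}

lemma bTime_le (hpos : Wpos G w) (hρ : 0 ≤ ρ) {σ : V → ℕ} {u : V} {S : Set V}
    (hσ : Valid G hG σ u S) : bTime G hG w ρ u S ≤ sSup (recvTime G hG w ρ σ u '' S) := by
  refine csInf_le ⟨0, ?_⟩ ⟨σ, hσ, rfl⟩
  rintro _ ⟨σ', -, rfl⟩
  exact Real.sSup_nonneg (by rintro _ ⟨z, -, rfl⟩; exact recvTime_nonneg hG hpos hρ σ' u z)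

variable [Finite V]

lemma exists_valid (u : V) (S : Set V) : ∃ σ, Valid G hG σ u S := by
  obtain ⟨n, ⟨e⟩⟩ := Finite.exists_equiv_fin V
  refine ⟨fun v => e v + 1, fun _ _ _ => Nat.le_add_left 1 _, fun z₁ _ z₂ _ _ _ hne _ h => ?_⟩
  exact hne (e.injective (Fin.val_injective (by simpa using h)))

lemma le_bTime {u : V} {S : Set V} {m : ℝ}
    (h : ∀ σ, Valid G hG σ u S → m ≤ sSup (recvTime G hG w ρ σ u '' S)) :
    m ≤ bTime G hG w ρ u S := by
  obtain ⟨σ, hσ⟩ := exists_valid hG u S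
  refine le_csInf ⟨_, σ, hσ, rfl⟩ ?_
  rintro _ ⟨σ, hσ, rfl⟩
  exact h σ hσ

lemma exists_valid_lt (u : V) (S : Set V) {ε : ℝ} (hε : 0 < ε) :
    ∃ σ, Valid G hG σ u S ∧ sSup (recvTime G hG w ρ σ u '' S) < bTime G hG w ρ u S + ε := by
  by_contra! h
  linarith [le_bTime hG h]

end BroadcastTimes

section BranchBounds

variable (hG : G.IsTree) {w : V → V → ℝ} {ρ : ℝ}

lemma valid_bbr_of_valid {σ : V → ℕ} {x y : V} {S : Set V} (hxy : G.Adj x y)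
    (hS : Bbr G x y ⊆ S) (hσ : Valid G hG σ y S) : Valid G hG σ x (Bbr G x y) := by
  have hne : ∀ z ∈ Bbr G x y, z ≠ y :=
    fun z hz => ne_of_mem_of_not_mem hz (not_mem_bbr_of_ne hxy.ne)
  refine ⟨fun z hz _ => hσ.1 z (hS hz) (hne z hz), fun z₁ hz₁ z₂ hz₂ h₁ h₂ h hpar => ?_⟩
  refine hσ.2 z₁ (hS hz₁) z₂ (hS hz₂) (hne z₁ hz₁) (hne z₂ hz₂) h ?_
  rwa [parent_eq_parent hG hxy.symm hz₁ h₁, parent_eq_parent hG hxy.symm hz₂ h₂]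

variable [Finite V]

lemma add_bTime_bbr_le (hpos : Wpos G w) (hρ : 0 ≤ ρ) {x y : V} {S : Set V} (hxy : G.Adj x y)
    (hS : Bbr G x y ⊆ S) : ρ + w y x + bTime G hG w ρ x (Bbr G x y) ≤ bTime G hG w ρ y S := by
  refine le_bTime hG fun σ hσ => ?_
  have hσx : ρ ≤ σ x * ρ :=
    le_mul_of_one_le_left hρ (by exact_mod_cast hσ.1 x (hS (self_mem_bbr x y)) hxy.ne)
  have hsup : sSup (recvTime G hG w ρ σ x '' Bbr G x y)
      ≤ sSup (recvTime G hG w ρ σ y '' S) - ρ - w y x := by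
    refine csSup_le (Set.image_nonempty.2 ⟨x, self_mem_bbr x y⟩) ?_
    rintro _ ⟨z, hz, rfl⟩
    have hz' := recvTime_le_sSup hG (w := w) (ρ := ρ) σ (u := y) (hS hz)
    rw [recvTime_cons hG σ hxy.symm hz] at hz'
    linarith
  linarith [bTime_le hG hpos hρ (valid_bbr_of_valid hG hxy hS hσ)]

lemma bTime_bbr_lt (hpos : Wpos G w) (hρ : 0 ≤ ρ) {x y z : V} (hxy : G.Adj x y)
    (hyz : G.Adj y z) (hxz : x ≠ z) :
    bTime G hG w ρ x (Bbr G x y) < bTime G hG w ρ y (Bbr G y z) := by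
  linarith [add_bTime_bbr_le hG hpos hρ hxy (bbr_subset hG hxy hyz hxz), hpos y x hxy.symm]

end BranchBounds

open scoped Classical in
/-- `x` first informs `y`, then runs `σ₁` on its own branch with its other neighbours delayed by
one slot, while `y` runs `σ₂` on its branch. -/
noncomputable def glueSchedule (G : SimpleGraph V) (x y : V) (σ₁ σ₂ : V → ℕ) : V → ℕ :=
  fun v => if v = y then 1 else if v ∈ Bbr G x y then σ₁ v + if G.Adj x v then 1 else 0 else σ₂ v

section Gluing

variable (hG : G.IsTree) {w : V → V → ℝ} {ρ : ℝ} {σ₁ σ₂ : V → ℕ} {x y : V}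

lemma glueSchedule_right : glueSchedule G x y σ₁ σ₂ y = 1 := if_pos rfl

lemma two_le_glueSchedule (hxy : G.Adj x y) (h₁ : Valid G hG σ₁ x (Bbr G x y)) {z : V}
    (hzx : z ≠ x) (hzy : z ≠ y) (hpar : parent G hG x z = x) :
    2 ≤ glueSchedule G x y σ₁ σ₂ z := by
  have hz : z ∈ Bbr G x y :=
    (parent_mem_bbr_iff hG hxy hzy).1 (by rw [hpar]; exact self_mem_bbr x y)
  have := h₁.1 z hz hzx
  simp [glueSchedule, hzy, hz, (adj_iff_parent_eq hG hzx).2 hpar]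
  omega

lemma valid_glueSchedule (hxy : G.Adj x y) (h₁ : Valid G hG σ₁ x (Bbr G x y))
    (h₂ : Valid G hG σ₂ y (Bbr G y x)) : Valid G hG (glueSchedule G x y σ₁ σ₂) x Set.univ := by
  classical
  refine ⟨fun z _ hzx => ?_, fun z₁ _ z₂ _ h₁x h₂x hne hpar => ?_⟩
  · rcases eq_or_ne z y with rfl | hzy
    · exact glueSchedule_right.ge
    by_cases hz : z ∈ Bbr G x y
    · simp only [glueSchedule, if_neg hzy, if_pos hz]
      exact (h₁.1 z hz hzx).trans (Nat.le_add_right _ _)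
    · simp only [glueSchedule, if_neg hzy, if_neg hz]
      exact h₂.1 z ((bbr_compl hG hxy).1 hz) hzy
  by_cases hy : z₁ = y ∨ z₂ = y
  · have hxpar : parent G hG x y = x := parent_of_adj hG hxy
    rcases hy with rfl | rfl
    · have := two_le_glueSchedule hG hxy h₁ (σ₂ := σ₂) h₂x hne.symm (hpar ▸ hxpar)
      rw [glueSchedule_right]
      omega
    · have := two_le_glueSchedule hG hxy h₁ (σ₂ := σ₂) h₁x hne (hpar.symm ▸ hxpar)
      rw [glueSchedule_right]
      omega
  push Not at hy
  obtain ⟨h₁y, h₂y⟩ := hy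
  have hside : z₁ ∈ Bbr G x y ↔ z₂ ∈ Bbr G x y := by
    rw [← parent_mem_bbr_iff hG hxy h₁y, hpar, parent_mem_bbr_iff hG hxy h₂y]
  by_cases hz₁ : z₁ ∈ Bbr G x y
  · have hz₂ := hside.1 hz₁
    have hadj : G.Adj x z₁ ↔ G.Adj x z₂ := by
      rw [adj_iff_parent_eq hG h₁x, adj_iff_parent_eq hG h₂x, hpar]
    have := h₁.2 z₁ hz₁ z₂ hz₂ h₁x h₂x hne hpar
    simp only [glueSchedule, if_neg h₁y, if_neg h₂y, if_pos hz₁, if_pos hz₂,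
      if_congr hadj rfl rfl]
    omega
  · have hz₂ : z₂ ∉ Bbr G x y := mt hside.2 hz₁
    simp only [glueSchedule, if_neg h₁y, if_neg h₂y, if_neg hz₁, if_neg hz₂]
    rw [bbr_compl hG hxy] at hz₁ hz₂
    refine h₂.2 z₁ hz₁ z₂ hz₂ h₁y h₂y hne ?_
    rwa [← parent_eq_parent hG hxy hz₁ h₁y, ← parent_eq_parent hG hxy hz₂ h₂y]

lemma recvTime_glueSchedule_of_mem_bbr_right (hxy : G.Adj x y) {z : V} (hz : z ∈ Bbr G y x) :
    recvTime G hG w ρ (glueSchedule G x y σ₁ σ₂) x z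
      = ρ + w x y + recvTime G hG w ρ σ₂ y z := by
  rw [recvTime_cons hG _ hxy hz, recvTime_congr hG (σ' := σ₂) hxy.symm hz]
  · simp [glueSchedule]
  · intro v hv hvy
    simp [glueSchedule, hvy, (bbr_compl hG hxy).2 hv]

lemma recvTime_glueSchedule_le_of_mem_bbr_left (hρ : 0 ≤ ρ) (hxy : G.Adj x y) {z : V}
    (hz : z ∈ Bbr G x y) :
    recvTime G hG w ρ (glueSchedule G x y σ₁ σ₂) x z ≤ recvTime G hG w ρ σ₁ x z + ρ := by
  rcases eq_or_ne z x with rfl | hzx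
  · simp [recvTime_self, hρ]
  obtain ⟨v, hxv, hzv⟩ := exists_adj_mem_bbr hG hzx
  have hvy : v ≠ y := by
    rintro rfl
    exact (bbr_compl hG hxy).2 hzv hz
  have hsub : Bbr G v x ⊆ Bbr G x y := bbr_subset hG hxv.symm hxy hvy
  have hcongr :
      recvTime G hG w ρ (glueSchedule G x y σ₁ σ₂) v z = recvTime G hG w ρ σ₁ v z := by
    refine recvTime_congr hG hxv.symm hzv fun u hu huv => ?_
    have huy : u ≠ y := ne_of_mem_of_not_mem (hsub hu) (not_mem_bbr_of_ne hxy.ne)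
    have hxu : ¬ G.Adj x u := fun h => huv (eq_of_adj_of_mem_bbr h hu hxv.ne')
    simp [glueSchedule, huy, hsub hu, hxu]
  rw [recvTime_cons hG _ hxv hzv, recvTime_cons hG _ hxv hzv, hcongr]
  simp only [glueSchedule, if_neg hvy, if_pos (hsub (self_mem_bbr v x)), if_pos hxv]
  push_cast
  linarith

end Gluing

section Centers

variable [Finite V] (hG : G.IsTree) {w : V → V → ℝ} {ρ : ℝ}

lemma bTimeT_le_add_max (hpos : Wpos G w) (hρ : 0 ≤ ρ) {x y : V} (hxy : G.Adj x y) :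
    bTimeT G hG w ρ x
      ≤ ρ + w x y + max (bTime G hG w ρ x (Bbr G x y)) (bTime G hG w ρ y (Bbr G y x)) := by
  set F₁ := bTime G hG w ρ x (Bbr G x y)
  set F₂ := bTime G hG w ρ y (Bbr G y x)
  refine le_of_forall_pos_lt_add fun ε hε => ?_
  obtain ⟨σ₁, hσ₁, hlt₁⟩ := exists_valid_lt hG (w := w) (ρ := ρ) x (Bbr G x y) hε
  obtain ⟨σ₂, hσ₂, hlt₂⟩ := exists_valid_lt hG (w := w) (ρ := ρ) y (Bbr G y x) hε
  set m₁ := sSup (recvTime G hG w ρ σ₁ x '' Bbr G x y)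
  set m₂ := sSup (recvTime G hG w ρ σ₂ y '' Bbr G y x)
  have hbound :
      ∀ z, recvTime G hG w ρ (glueSchedule G x y σ₁ σ₂) x z ≤ ρ + w x y + max m₁ m₂ := by
    intro z
    by_cases hz : z ∈ Bbr G x y
    · have hle :=
        recvTime_glueSchedule_le_of_mem_bbr_left hG (w := w) (σ₁ := σ₁) (σ₂ := σ₂) hρ hxy hz
      linarith [recvTime_le_sSup hG (w := w) (ρ := ρ) σ₁ (u := x) hz, le_max_left m₁ m₂,
        hpos x y hxy]
    · rw [bbr_compl hG hxy] at hz
      rw [recvTime_glueSchedule_of_mem_bbr_right hG hxy hz]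
      linarith [recvTime_le_sSup hG (w := w) (ρ := ρ) σ₂ (u := y) hz, le_max_right m₁ m₂]
  calc bTimeT G hG w ρ x
      ≤ sSup (recvTime G hG w ρ (glueSchedule G x y σ₁ σ₂) x '' Set.univ) :=
        bTime_le hG hpos hρ (valid_glueSchedule hG hxy hσ₁ hσ₂)
    _ ≤ ρ + w x y + max m₁ m₂ :=
        csSup_le ⟨_, x, Set.mem_univ x, rfl⟩ (by rintro _ ⟨z, -, rfl⟩; exact hbound z)
    _ < ρ + w x y + max (F₁ + ε) (F₂ + ε) := by gcongr ?_ + ?_; exact max_lt_max hlt₁ hlt₂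
    _ = ρ + w x y + max F₁ F₂ + ε := by rw [max_add_add_right]; ring

lemma bTimeT_le_of_bTime_bbr_le (hsym : Wsymm w) (hpos : Wpos G w) (hρ : 0 ≤ ρ) {x y : V}
    (hxy : G.Adj x y) (h : bTime G hG w ρ y (Bbr G y x) ≤ bTime G hG w ρ x (Bbr G x y)) :
    bTimeT G hG w ρ x ≤ bTimeT G hG w ρ y := by
  have hup := bTimeT_le_add_max hG hpos hρ hxy
  rw [max_eq_left h] at hup
  have hlow := add_bTime_bbr_le hG hpos hρ hxy (Set.subset_univ _)
  rw [hsym y x] at hlow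
  exact hup.trans hlow

lemma exists_forall_adj_bTime_bbr_le [Nonempty V] (hpos : Wpos G w) (hρ : 0 ≤ ρ) :
    ∃ κ, ∀ u, G.Adj κ u → bTime G hG w ρ u (Bbr G u κ) ≤ bTime G hG w ρ κ (Bbr G κ u) := by
  by_contra! h
  choose next hadj hlt using h
  obtain ⟨v, hv⟩ := Finite.exists_max fun v => bTime G hG w ρ v (Bbr G v (next v))
  have hback : v ≠ next (next v) := fun h => (hlt (next v)).not_gt (h ▸ hlt v)
  exact (hv (next v)).not_gt (bTime_bbr_lt hG hpos hρ (hadj v) (hadj (next v)) hback)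

lemma mem_bCtr_of_forall_adj (hsym : Wsymm w) (hpos : Wpos G w) (hρ : 0 ≤ ρ) {κ : V}
    (hκ : ∀ u, G.Adj κ u → bTime G hG w ρ u (Bbr G u κ) ≤ bTime G hG w ρ κ (Bbr G κ u)) :
    κ ∈ BCtr G hG w ρ := by
  suffices h : ∀ v (q : G.Walk v κ), q.IsPath → bTimeT G hG w ρ κ ≤ bTimeT G hG w ρ v ∧
      ∀ z, G.Adj v z → z ∉ q.support → bTime G hG w ρ z (Bbr G z v) ≤ bTime G hG w ρ v (Bbr G v z)
    from fun v => (h v _ (tPath_isPath hG v κ)).1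
  intro v q
  induction q with
  | nil => exact fun _ => ⟨le_rfl, fun z hz _ => hκ z hz⟩
  | @cons v c _ hvc q ih =>
    intro hq
    obtain ⟨hq, hv⟩ := (cons_isPath_iff hvc q).1 hq
    obtain ⟨hκc, hc⟩ := ih hκ hq
    have hcv := hc v hvc.symm hv
    refine ⟨hκc.trans (bTimeT_le_of_bTime_bbr_le hG hsym hpos hρ hvc.symm hcv),
      fun z hvz hz => ?_⟩
    have hzc : z ≠ c := by
      rintro rfl
      simp at hz
    exact (bTime_bbr_lt hG hpos hρ hvz.symm hvc hzc).le.trans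
      (hcv.trans (bTime_bbr_lt hG hpos hρ hvc.symm hvz hzc.symm).le)

end Centers

theorem stmt3_general {V : Type*} [Fintype V] [Nonempty V]
    (G : SimpleGraph V) (hG : G.IsTree)
    (w : V → V → ℝ) (hsym : Wsymm w) (hpos : Wpos G w) (ρ : ℝ) (hρ : 0 < ρ) :
    ∃ κ, IsPrime G hG w ρ κ := by
  obtain ⟨κ, hκ⟩ := exists_forall_adj_bTime_bbr_le hG hpos hρ.le
  exact ⟨κ, mem_bCtr_of_forall_adj hG hsym hpos hρ.le hκ, hκ⟩

/-- A prime broadcast center of `T` always exists. -/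
theorem stmt3 {V : Type*} [Fintype V] [DecidableEq V] [Nonempty V]
    (G : SimpleGraph V) (hG : G.IsTree)
    (w : V → V → ℝ) (hsym : Wsymm w) (hpos : Wpos G w) (ρ : ℝ) (hρ : 0 < ρ) :
    ∃ κ, IsPrime G hG w ρ κ :=
  stmt3_general G hG w hsym hpos ρ hρ

end Postal
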